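/- Every graph of NLC-width at most k has clique-width at most 2k. -/

import Mathlib

open SimpleGraph

/-- Edge insertion `η_{a,b}`: add all edges between vertices labeled `a` and `b`. -/
def etaG {V : Type} {k : ℕ} (G : SimpleGraph V) (lab : V → Fin k) (a b : Fin k) :
    SimpleGraph V where
  Adj x y := G.Adj x y ∨ (x ≠ y ∧ ((lab x = a ∧ lab y = b) ∨ (lab x = b ∧ lab y = a)))
  symm := by
    constructor
    intro x y h
    rcases h with h | ⟨hxy, h⟩
    · exact Or.inl h.symm
    · rcases h with ⟨h1,h2⟩|⟨h1,h2⟩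
      · exact Or.inr ⟨hxy.symm, Or.inr ⟨h2,h1⟩⟩
      · exact Or.inr ⟨hxy.symm, Or.inl ⟨h2,h1⟩⟩
  loopless := by
    constructor
    intro x h
    rcases h with h | ⟨hxx, _⟩
    · exact G.irrefl h
    · exact hxx rfl

/-- NLC-width union operation `×_S`. -/
def nlcJoin {V W : Type} {k : ℕ} (G : SimpleGraph V) (H : SimpleGraph W)
    (labG : V → Fin k) (labH : W → Fin k) (S : Set (Fin k × Fin k)) :
    SimpleGraph (V ⊕ W) where
  Adj x y := match x, y with
    | .inl a, .inl b => G.Adj a b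
    | .inr a, .inr b => H.Adj a b
    | .inl a, .inr b => (labG a, labH b) ∈ S
    | .inr a, .inl b => (labG b, labH a) ∈ S
  symm := by
    constructor
    rintro (a | a) (b | b) h
    · exact G.adj_symm h
    · exact h
    · exact h
    · exact H.adj_symm h
  loopless := by
    constructor
    rintro (a | a) h
    · exact G.irrefl h
    · exact H.irrefl h

/-- Labeled graphs constructible by clique-width operations with labels in `Fin k`. -/
inductive CWBuild (k : ℕ) : {V : Type} → SimpleGraph V → (V → Fin k) → Prop
  | single (a : Fin k) : CWBuild k (⊥ : SimpleGraph PUnit) (fun _ => a)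
  | union {V W : Type} {G : SimpleGraph V} {H : SimpleGraph W}
      {labG : V → Fin k} {labH : W → Fin k} :
      CWBuild k G labG → CWBuild k H labH →
      CWBuild k (G ⊕g H) (Sum.elim labG labH)
  | insertEdges {V : Type} {G : SimpleGraph V} {lab : V → Fin k} (a b : Fin k)
      (hab : a ≠ b) : CWBuild k G lab → CWBuild k (etaG G lab a b) lab
  | relabel {V : Type} {G : SimpleGraph V} {lab : V → Fin k} (a b : Fin k) :
      CWBuild k G lab → CWBuild k G (fun v => if lab v = a then b else lab v)

/-- `G` is definable by a clique-width `k`-expression. -/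
def HasCW (k : ℕ) {V : Type} (G : SimpleGraph V) : Prop :=
  ∃ (W : Type) (H : SimpleGraph W) (lab : W → Fin k),
    CWBuild k H lab ∧ Nonempty (G ≃g H)

/-- The clique-width of `G`. -/
noncomputable def cliquewidth {V : Type} (G : SimpleGraph V) : ℕ :=
  sInf {k | HasCW k G}

/-- Labeled graphs constructible by NLC-width operations with labels in `Fin k`. -/
inductive NLCBuild (k : ℕ) : {V : Type} → SimpleGraph V → (V → Fin k) → Prop
  | single (a : Fin k) : NLCBuild k (⊥ : SimpleGraph PUnit) (fun _ => a)
  | join {V W : Type} {G : SimpleGraph V} {H : SimpleGraph W}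
      {labG : V → Fin k} {labH : W → Fin k} (S : Set (Fin k × Fin k)) :
      NLCBuild k G labG → NLCBuild k H labH →
      NLCBuild k (nlcJoin G H labG labH S) (Sum.elim labG labH)
  | relabel {V : Type} {G : SimpleGraph V} {lab : V → Fin k} (R : Fin k → Fin k) :
      NLCBuild k G lab → NLCBuild k G (R ∘ lab)

/-- `G` is definable by an NLC-width `k`-expression. -/
def HasNLC (k : ℕ) {V : Type} (G : SimpleGraph V) : Prop :=
  ∃ (W : Type) (H : SimpleGraph W) (lab : W → Fin k),
    NLCBuild k H lab ∧ Nonempty (G ≃g H)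

/-- The NLC-width of `G`. -/
noncomputable def nlcwidth {V : Type} (G : SimpleGraph V) : ℕ :=
  sInf {k | HasNLC k G}

/-!
A clique-width expression with labels `Fin k ⊕ Fin k` simulates an NLC `k`-expression: the
left copy carries the NLC labels and the right copy is a parking area. For `G ×_S H`, park the
labels of `H`, take `G ⊕ H`, apply `η_{(a,left),(b,right)}` for each `(a, b) ∈ S`, and move
every label back to the left. For `∘_R`, send `(a,left)` to `(R a,right)` first, so that no
two labels merge before all of them have moved. Relabeling by any idempotent map is a sequence
of `ρ_{a→b}`.

Giving every vertex its own label shows that a finite nonempty graph has an NLC expression, so its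
NLC-width is attained. Graphs without any clique-width expression have clique-width `sInf ∅ = 0`.
-/

open Function

namespace CWBuild

variable {K : ℕ} {V : Type} {G : SimpleGraph V}

lemma comp_of_forall_notMem {lab : V → Fin K} (hG : CWBuild K G lab)
    (A : Finset (Fin K)) :
    ∀ f : Fin K → Fin K, (∀ x ∉ A, f x = x) → (∀ x, f x ∉ A) → CWBuild K G (f ∘ lab) := by
  classical
  induction A using Finset.induction_on with
  | empty =>
    intro f hfix _
    have hf : f = id := funext fun x => hfix x (Finset.notMem_empty x)
    exact hf ▸ hG
  | @insert a A ha ih =>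
    intro f hfix hout
    -- realize `f` with `a` kept fixed, then one `ρ_{a→f a}`
    have h' := ih (update f a a)
      (fun x hx => by
        rcases eq_or_ne x a with rfl | hxa
        · simp
        · simpa [hxa] using hfix x (by simp [hxa, hx]))
      (fun x => by
        rcases eq_or_ne x a with rfl | hxa
        · simpa using ha
        · simpa [hxa] using fun h => hout x (Finset.mem_insert_of_mem h))
    convert h'.relabel a (f a) using 1
    funext v
    rcases eq_or_ne (lab v) a with hv | hv
    · simp [hv]
    · have hfa : f (lab v) ≠ a := fun h => hout (lab v) (h ▸ Finset.mem_insert_self a A)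
      simp [hv, hfa]

lemma comp_of_idempotent {lab : V → Fin K} (hG : CWBuild K G lab) {f : Fin K → Fin K}
    (hf : ∀ x, f (f x) = f x) : CWBuild K G (f ∘ lab) := by
  classical
  exact hG.comp_of_forall_notMem {x | f x ≠ x} f (by simp) (by simp [hf])

lemma equiv_comp_of_idempotent {α : Type} (e : α ≃ Fin K) {lab : V → α}
    (hG : CWBuild K G (e ∘ lab)) (φ : α → α) (hφ : ∀ x, φ (φ x) = φ x) :
    CWBuild K G (e ∘ φ ∘ lab) := by
  simpa [comp_def] using hG.comp_of_idempotent (f := e ∘ φ ∘ e.symm) (by simp [hφ])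

lemma nonempty {lab : V → Fin K} (hG : CWBuild K G lab) : Nonempty V := by
  induction hG with
  | single => exact ⟨PUnit.unit⟩
  | union _ _ ih _ => exact ⟨Sum.inl ih.some⟩
  | insertEdges _ _ _ _ ih => exact ih
  | relabel _ _ _ ih => exact ih

lemma finite {lab : V → Fin K} (hG : CWBuild K G lab) : Finite V := by
  induction hG with
  | single => infer_instance
  | union => infer_instance
  | insertEdges _ _ _ _ ih => exact ih
  | relabel _ _ _ ih => exact ih

end CWBuild

section Simulation

variable {m K : ℕ} (e : Fin m ⊕ Fin m ≃ Fin K)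

lemma etaG_nlcJoin {V W : Type} (G : SimpleGraph V) (H : SimpleGraph W)
    (labG : V → Fin m) (labH : W → Fin m) (S : Set (Fin m × Fin m)) (a b : Fin m) :
    etaG (nlcJoin G H labG labH S) (e ∘ Sum.map labG labH) (e (.inl a)) (e (.inr b)) =
      nlcJoin G H labG labH (insert (a, b) S) := by
  ext (x | x) (y | y) <;> simp [etaG, nlcJoin] <;> tauto

variable {e}

lemma CWBuild.nlcJoin_of_subset {V W : Type} {G : SimpleGraph V} {H : SimpleGraph W}
    {labG : V → Fin m} {labH : W → Fin m}
    (hGH : CWBuild K (G ⊕g H) (e ∘ Sum.map labG labH)) (S : Set (Fin m × Fin m)) :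
    CWBuild K (nlcJoin G H labG labH S) (e ∘ Sum.map labG labH) := by
  induction S, S.toFinite using Set.Finite.induction_on with
  | empty =>
    convert hGH using 1
    ext (x | x) (y | y) <;> simp [nlcJoin]
  | @insert p S _ _ ih =>
    rw [← etaG_nlcJoin]
    exact ih.insertEdges _ _ (by simp)

lemma NLCBuild.toCWBuild {V : Type} {G : SimpleGraph V} {lab : V → Fin m}
    (hG : NLCBuild m G lab) : CWBuild K G (e ∘ Sum.inl ∘ lab) := by
  induction hG with
  | single a => exact CWBuild.single (e (.inl a))
  | @join V W G H labG labH S _ _ ihG ihH =>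
    have hH : CWBuild K H (e ∘ Sum.inr ∘ labH) :=
      ihH.equiv_comp_of_idempotent e (Sum.elim Sum.inr Sum.inr) (by rintro (_ | _) <;> rfl)
    have hGH : CWBuild K (G ⊕g H) (e ∘ Sum.map labG labH) := by
      convert ihG.union hH using 1
      ext (_ | _) <;> rfl
    convert (hGH.nlcJoin_of_subset S).equiv_comp_of_idempotent e (Sum.elim Sum.inl Sum.inl)
      (by rintro (_ | _) <;> rfl) using 1
    ext (_ | _) <;> rfl
  | relabel R _ ih =>
    exact (ih.equiv_comp_of_idempotent e (Sum.elim (Sum.inr ∘ R) Sum.inr)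
      (by rintro (_ | _) <;> rfl)).equiv_comp_of_idempotent e (Sum.elim Sum.inl Sum.inl)
      (by rintro (_ | _) <;> rfl)

end Simulation

section Existence

variable {N : ℕ}

def NLCRealizes {V : Type} (G : SimpleGraph V) (lab : V → Fin N) : Prop :=
  ∃ (W : Type) (H : SimpleGraph W) (labH : W → Fin N) (e : G ≃g H),
    NLCBuild N H labH ∧ ∀ v, labH (e v) = lab v

lemma NLCRealizes.of_iso {V V' : Type} {G : SimpleGraph V} {G' : SimpleGraph V'}
    {lab : V → Fin N} (hG : NLCRealizes G lab) (f : G' ≃g G) : NLCRealizes G' (lab ∘ f) := by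
  obtain ⟨W, H, labH, e, hb, hlab⟩ := hG
  exact ⟨W, H, labH, f.trans e, hb, fun v => hlab (f v)⟩

lemma nlcRealizes_of_unique {V : Type} [Unique V] (G : SimpleGraph V) (lab : V → Fin N) :
    NLCRealizes G lab :=
  ⟨PUnit, ⊥, fun _ => lab default,
    ⟨Equiv.equivPUnit V, fun {a b} => by simp [Subsingleton.elim a b]⟩,
    NLCBuild.single _, fun v => by rw [Unique.eq_default v]⟩

-- Adding the vertex `none` is a join with a single vertex; injectivity of `lab` lets the label
-- of a vertex `some v` decide whether it is adjacent to `none`.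
lemma NLCRealizes.option {α : Type} {G : SimpleGraph (Option α)} {lab : Option α → Fin N}
    (hlab : Injective lab) (hG : NLCRealizes (G.comap some) (lab ∘ some)) :
    NLCRealizes G lab := by
  obtain ⟨W, H, labH, e, hb, hlabH⟩ := hG
  let S : Set (Fin N × Fin N) := {p | ∃ v, G.Adj (some v) none ∧ p.1 = lab (some v)}
  have hS (v : α) : (lab (some v), lab none) ∈ S ↔ G.Adj (some v) none :=
    ⟨fun ⟨u, hu, huv⟩ => hlab huv ▸ hu, fun h => ⟨v, h, rfl⟩⟩
  refine ⟨W ⊕ PUnit, nlcJoin H ⊥ labH (fun _ => lab none) S, Sum.elim labH fun _ => lab none,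
    ⟨(Equiv.optionEquivSumPUnit α).trans (Equiv.sumCongr e.toEquiv (Equiv.refl _)), ?_⟩,
    hb.join S (NLCBuild.single _), ?_⟩
  · rintro (_ | u) (_ | v)
    · simp [nlcJoin]
    · simp [nlcJoin, hlabH, hS, G.adj_comm none]
    · simp [nlcJoin, hlabH, hS]
    · simp [nlcJoin, e.map_adj_iff]
  · rintro (_ | v)
    · rfl
    · exact hlabH v

lemma nlcRealizes_of_injective (V : Type) [Finite V] [hV : Nonempty V] (G : SimpleGraph V)
    (lab : V → Fin N) (hlab : Injective lab) : NLCRealizes G lab := by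
  revert hV
  induction V using Finite.induction_empty_option with
  | of_equiv f ih =>
    intro _
    have := f.nonempty
    simpa [comp_def] using (ih _ _ (hlab.comp f.injective)).of_iso (Iso.comap f G).symm
  | h_empty => exact (not_nonempty_pempty ‹_›).elim
  | @h_option α _ ih =>
    cases isEmpty_or_nonempty α
    · exact nlcRealizes_of_unique G lab
    · exact NLCRealizes.option hlab (ih _ _ (hlab.comp (Option.some_injective α)))

end Existence

lemma HasNLC.hasCW {k : ℕ} {V : Type} {G : SimpleGraph V} (h : HasNLC k G) : HasCW (2 * k) G :=
  let ⟨W, H, _, hb, e⟩ := h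
  ⟨W, H, _, hb.toCWBuild (e := finSumFinEquiv.trans (finCongr (two_mul k).symm)), e⟩

lemma hasNLC_card {V : Type} [Finite V] [Nonempty V] (G : SimpleGraph V) :
    HasNLC (Nat.card V) G :=
  let ⟨W, H, labH, e, hb, _⟩ :=
    nlcRealizes_of_injective V G (Finite.equivFin V) (Finite.equivFin V).injective
  ⟨W, H, labH, hb, ⟨e⟩⟩

lemma HasCW.finite_and_nonempty {k : ℕ} {V : Type} {G : SimpleGraph V} (h : HasCW k G) :
    Finite V ∧ Nonempty V :=
  let ⟨_, _, _, hb, ⟨e⟩⟩ := h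
  have := hb.finite
  have := hb.nonempty
  ⟨.of_equiv _ e.toEquiv.symm, e.toEquiv.nonempty⟩

theorem cliquewidth_le_two_mul_nlcwidth_general {V : Type} (G : SimpleGraph V)
    (k : ℕ) (h : nlcwidth G ≤ k) : cliquewidth G ≤ 2 * k := by
  rcases Set.eq_empty_or_nonempty {k | HasCW k G} with hCW | ⟨j, hj⟩
  · simp [cliquewidth, hCW]
  · obtain ⟨_, _⟩ := HasCW.finite_and_nonempty hj
    have hNLC : HasNLC (nlcwidth G) G := Nat.sInf_mem (s := {k | HasNLC k G}) ⟨_, hasNLC_card G⟩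
    calc cliquewidth G ≤ 2 * nlcwidth G := Nat.sInf_le hNLC.hasCW
      _ ≤ 2 * k := by omega

/-- Every graph of NLC-width at most `k` has clique-width at most `2 * k`. -/
theorem cliquewidth_le_two_mul_nlcwidth {V : Type} [Fintype V] (G : SimpleGraph V)
    (k : ℕ) (h : nlcwidth G ≤ k) : cliquewidth G ≤ 2 * k :=
  cliquewidth_le_two_mul_nlcwidth_general G k h
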